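/- (Deterministic descent with device-specific constants.) Fix a base point w₀ ∈ ℝ^d and a vector g ∈ ℝ^d. For a device k, let μ_k > 0, γ_k ∈ [0,1) and L_k > 0, suppose F_k is convex with L_k-Lipschitz gradient and f has L_k-Lipschitz gradient, let w̲_k be the exact minimizer of the FedDANE subproblem P_k(w) = F_k(w) + ⟨g − ∇F_k(w₀), w − w₀⟩ + (μ_k/2)‖w − w₀‖², and let w_k satisfy ‖w_k − w̲_k‖ ≤ γ_k ‖w̲_k − w₀‖. Then f(w_k) ≤ f(w₀) − ⟨∇f(w₀), g⟩/μ_k + (L_k/(2μ_k²) + γ_k/(2μ_k)) (‖∇f(w₀)‖² + ‖g‖²) + (L_k(1+γ_k)²/(2μ_k²)) ‖g‖². -/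

import Mathlib

/-!
The exact minimizer `w̄` of the subproblem satisfies `μ (w̄ - w₀) = -(∇F(w̄) - ∇F(w₀) + g)`.
Pairing this with `w̄ - w₀` and using that the gradient of the convex `F` is monotone gives
`‖w̄ - w₀‖ ≤ ‖g‖ / μ`. The descent lemma for `f` at `w₀` then leaves `⟪∇f(w₀), w_k - w₀⟫` and
`‖w_k - w₀‖` to be bounded, which follows from this step bound, the Lipschitz bound on `∇F`,
the inexactness bound and `2ab ≤ a² + b²`.
-/

open scoped RealInnerProductSpace

open InnerProductSpace

section Gradient

variable {E : Type*} [NormedAddCommGroup E] [InnerProductSpace ℝ E] [CompleteSpace E]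
  {f : E → ℝ}

theorem HasGradientAt.hasDerivAt_comp_add_smul {f' x v : E} {t : ℝ}
    (h : HasGradientAt f f' (x + t • v)) :
    HasDerivAt (fun s : ℝ => f (x + s • v)) ⟪f', v⟫ t := by
  have hline : HasDerivAt (fun s : ℝ => x + s • v) v t := by
    simpa using ((hasDerivAt_id t).smul_const v).const_add x
  have h' : HasDerivAt (fun s : ℝ => f (x + s • v)) (toDual ℝ E f' v) t :=
    (hasGradientAt_iff_hasFDerivAt.1 h).comp_hasDerivAt t hline
  simpa using h'

theorem ConvexOn.add_inner_gradient_le (hf : ConvexOn ℝ Set.univ f) {x : E}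
    (hx : DifferentiableAt ℝ f x) (y : E) :
    f x + ⟪gradient f x, y - x⟫ ≤ f y := by
  have hconv : ConvexOn ℝ Set.univ (f ∘ (AffineMap.lineMap x y : ℝ →ᵃ[ℝ] E)) :=
    hf.comp_affineMap _
  have hderiv : HasDerivAt (f ∘ (AffineMap.lineMap x y : ℝ →ᵃ[ℝ] E)) ⟪gradient f x, y - x⟫ 0 := by
    have hline : f ∘ (AffineMap.lineMap x y : ℝ →ᵃ[ℝ] E) = fun s : ℝ => f (x + s • (y - x)) := by
      ext s
      simp [AffineMap.lineMap_apply_module', add_comm]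
    rw [hline]
    exact (by simpa using hx.hasGradientAt :
      HasGradientAt f (gradient f x) (x + (0 : ℝ) • (y - x))).hasDerivAt_comp_add_smul
  have := hconv.le_slope_of_hasDerivAt (Set.mem_univ 0) (Set.mem_univ 1) zero_lt_one hderiv
  simp only [slope_def_field, Function.comp_apply, AffineMap.lineMap_apply_one,
    AffineMap.lineMap_apply_zero, sub_zero, div_one] at this
  linarith

theorem ConvexOn.inner_gradient_sub_gradient_nonneg (hf : ConvexOn ℝ Set.univ f)
    (hd : Differentiable ℝ f) (x y : E) :
    0 ≤ ⟪gradient f y - gradient f x, y - x⟫ := by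
  have hxy := hf.add_inner_gradient_le (hd x) y
  have hyx := hf.add_inner_gradient_le (hd y) x
  rw [← neg_sub y x, inner_neg_right] at hyx
  rw [inner_sub_left]
  linarith

theorem le_add_inner_gradient_add_of_lipschitz_gradient (hf : Differentiable ℝ f) {L : ℝ}
    (hL : ∀ a b, ‖gradient f a - gradient f b‖ ≤ L * ‖a - b‖) (x y : E) :
    f y ≤ f x + ⟪gradient f x, y - x⟫ + L / 2 * ‖y - x‖ ^ 2 := by
  set v := y - x
  let ψ : ℝ → ℝ := fun t => f (x + t • v) - t * ⟪gradient f x, v⟫ - L / 2 * t ^ 2 * ‖v‖ ^ 2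
  have hψ : ∀ t, HasDerivAt ψ (⟪gradient f (x + t • v) - gradient f x, v⟫ - L * t * ‖v‖ ^ 2) t := by
    intro t
    have h := (((hf (x + t • v)).hasGradientAt.hasDerivAt_comp_add_smul).sub
      ((hasDerivAt_id t).mul_const ⟪gradient f x, v⟫)).sub
      (((hasDerivAt_pow 2 t).const_mul (L / 2)).mul_const (‖v‖ ^ 2))
    refine h.congr_deriv ?_
    simp only [inner_sub_left, Nat.cast_ofNat, Nat.add_one_sub_one, pow_one]
    ring
  have hslope : ∀ t ∈ interior (Set.Icc (0 : ℝ) 1),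
      ⟪gradient f (x + t • v) - gradient f x, v⟫ - L * t * ‖v‖ ^ 2 ≤ 0 := by
    intro t ht
    rw [interior_Icc] at ht
    have hnorm : ‖x + t • v - x‖ = t * ‖v‖ := by
      simp [norm_smul, abs_of_pos ht.1]
    calc ⟪gradient f (x + t • v) - gradient f x, v⟫ - L * t * ‖v‖ ^ 2
        ≤ ‖gradient f (x + t • v) - gradient f x‖ * ‖v‖ - L * t * ‖v‖ ^ 2 := by
          gcongr; exact real_inner_le_norm _ _
      _ ≤ L * ‖x + t • v - x‖ * ‖v‖ - L * t * ‖v‖ ^ 2 := by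
          gcongr; exact hL _ _
      _ = 0 := by rw [hnorm]; ring
  have hanti : AntitoneOn ψ (Set.Icc 0 1) :=
    antitoneOn_of_hasDerivWithinAt_nonpos (convex_Icc 0 1)
      (fun t _ => (hψ t).continuousAt.continuousWithinAt)
      (fun t _ => (hψ t).hasDerivWithinAt) hslope
  have h01 := hanti (Set.left_mem_Icc.2 zero_le_one) (Set.right_mem_Icc.2 zero_le_one)
    zero_le_one
  simp only [ψ, v, zero_smul, one_smul, add_zero, add_sub_cancel, one_mul, one_pow, mul_one,
    zero_mul, sub_zero, ne_eq, OfNat.ofNat_ne_zero, not_false_eq_true, zero_pow, mul_zero] at h01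
  linarith

theorem IsLocalMin.hasGradientAt_eq_zero {f' a : E} (h : IsLocalMin f a)
    (hf : HasGradientAt f f' a) : f' = 0 :=
  (toDual ℝ E).map_eq_zero_iff.1 (h.hasFDerivAt_eq_zero (hasGradientAt_iff_hasFDerivAt.1 hf))

end Gradient

section FedDane

variable {E : Type*} [NormedAddCommGroup E] [InnerProductSpace ℝ E] [CompleteSpace E]
  {F : E → ℝ} {w₀ g w : E} {μ : ℝ}

noncomputable def fedDaneSubproblem (F : E → ℝ) (w₀ g : E) (μ : ℝ) (w : E) : ℝ :=
  F w + ⟪g - gradient F w₀, w - w₀⟫ + μ / 2 * ‖w - w₀‖ ^ 2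

theorem hasGradientAt_fedDaneSubproblem (hF : DifferentiableAt ℝ F w) :
    HasGradientAt (fedDaneSubproblem F w₀ g μ)
      (gradient F w + (g - gradient F w₀) + μ • (w - w₀)) w := by
  have hsub := (hasFDerivAt_id (𝕜 := ℝ) w).sub_const w₀
  have h : HasFDerivAt (fedDaneSubproblem F w₀ g μ)
      (toDual ℝ E (gradient F w) + (toDual ℝ E (g - gradient F w₀)).comp (.id ℝ E) +
        (μ / 2) • (2 • (innerSL ℝ (w - w₀)).comp (.id ℝ E))) w :=
    ((hasGradientAt_iff_hasFDerivAt.1 hF.hasGradientAt).add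
      ((toDual ℝ E (g - gradient F w₀)).hasFDerivAt.comp w hsub)).add
      (hsub.norm_sq.const_mul (μ / 2))
  rw [hasGradientAt_iff_hasFDerivAt]
  refine h.congr_fderiv ?_
  ext y
  simp only [add_apply, ContinuousLinearMap.comp_id,
    smul_apply, toDual_apply_apply, coe_innerSL_apply, inner_add_left,
    real_inner_smul_left, nsmul_eq_mul, Nat.cast_ofNat, smul_eq_mul]
  ring

theorem fedDaneSubproblem_optimality (hF : DifferentiableAt ℝ F w)
    (hmin : IsLocalMin (fedDaneSubproblem F w₀ g μ) w) :
    μ • (w - w₀) = -(gradient F w - gradient F w₀ + g) := by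
  have h := hmin.hasGradientAt_eq_zero (hasGradientAt_fedDaneSubproblem hF)
  rw [eq_neg_iff_add_eq_zero, ← h]
  abel

theorem norm_sub_le_of_isLocalMin_fedDaneSubproblem (hconv : ConvexOn ℝ Set.univ F)
    (hF : Differentiable ℝ F) (hμ : 0 < μ) (hmin : IsLocalMin (fedDaneSubproblem F w₀ g μ) w) :
    ‖w - w₀‖ ≤ ‖g‖ / μ := by
  have hmono := hconv.inner_gradient_sub_gradient_nonneg hF w₀ w
  have hsq : μ * ‖w - w₀‖ ^ 2 ≤ ‖g‖ * ‖w - w₀‖ := calc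
    μ * ‖w - w₀‖ ^ 2 = ⟪μ • (w - w₀), w - w₀⟫ := by
      rw [real_inner_smul_left, real_inner_self_eq_norm_sq]
    _ = -⟪gradient F w - gradient F w₀, w - w₀⟫ + ⟪-g, w - w₀⟫ := by
      rw [fedDaneSubproblem_optimality (hF w) hmin, inner_neg_left, inner_neg_left,
        inner_add_left]
      ring
    _ ≤ 0 + ‖-g‖ * ‖w - w₀‖ := add_le_add (by linarith) (real_inner_le_norm _ _)
    _ = ‖g‖ * ‖w - w₀‖ := by rw [norm_neg, zero_add]
  rw [le_div_iff₀' hμ]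
  rcases (norm_nonneg (w - w₀)).eq_or_lt with h0 | h0
  · rw [← h0, mul_zero]; exact norm_nonneg g
  · exact le_of_mul_le_mul_right (by linarith) h0

theorem inner_sub_le_of_isLocalMin_fedDaneSubproblem (G : E) {wk : E} {L γ : ℝ} (hL : 0 ≤ L)
    (hγ : 0 ≤ γ) (hLip : ∀ x y, ‖gradient F x - gradient F y‖ ≤ L * ‖x - y‖)
    (hconv : ConvexOn ℝ Set.univ F) (hF : Differentiable ℝ F) (hμ : 0 < μ)
    (hmin : IsLocalMin (fedDaneSubproblem F w₀ g μ) w)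
    (hinexact : ‖wk - w‖ ≤ γ * ‖w - w₀‖) :
    ⟪G, wk - w₀⟫ ≤ -⟪G, g⟫ / μ + (L / μ + γ) * (‖G‖ * ‖g‖) / μ := by
  have hstep := norm_sub_le_of_isLocalMin_fedDaneSubproblem hconv hF hμ hmin
  have hopt : μ * ⟪G, w - w₀⟫ = -⟪G, gradient F w - gradient F w₀⟫ - ⟪G, g⟫ := by
    rw [← real_inner_smul_right, fedDaneSubproblem_optimality (hF w) hmin, inner_neg_right,
      inner_add_right]
    ring
  have hgrad : -⟪G, gradient F w - gradient F w₀⟫ ≤ ‖G‖ * (L * (‖g‖ / μ)) := calc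
    -⟪G, gradient F w - gradient F w₀⟫ ≤ ‖G‖ * ‖gradient F w - gradient F w₀‖ := by
      rw [← inner_neg_right]
      exact (real_inner_le_norm _ _).trans_eq (by rw [norm_neg])
    _ ≤ ‖G‖ * (L * (‖g‖ / μ)) := by
      gcongr
      exact (hLip w w₀).trans (by gcongr)
  have herr : ⟪G, wk - w⟫ ≤ ‖G‖ * (γ * (‖g‖ / μ)) := calc
    ⟪G, wk - w⟫ ≤ ‖G‖ * ‖wk - w‖ := real_inner_le_norm _ _
    _ ≤ ‖G‖ * (γ * (‖g‖ / μ)) := by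
      gcongr
      exact hinexact.trans (by gcongr)
  calc ⟪G, wk - w₀⟫ = ⟪G, wk - w⟫ + (-⟪G, gradient F w - gradient F w₀⟫) / μ + -⟪G, g⟫ / μ := by
        rw [← sub_add_sub_cancel wk w w₀, inner_add_right, add_assoc, ← add_div,
          ← sub_eq_add_neg, ← hopt, mul_div_cancel_left₀ _ hμ.ne']
    _ ≤ ‖G‖ * (γ * (‖g‖ / μ)) + ‖G‖ * (L * (‖g‖ / μ)) / μ + -⟪G, g⟫ / μ := by gcongr
    _ = -⟪G, g⟫ / μ + (L / μ + γ) * (‖G‖ * ‖g‖) / μ := by ring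

end FedDane

theorem feddane_inexact_descent_device_specific_general {d N : ℕ}
    (F : Fin N → EuclideanSpace ℝ (Fin d) → ℝ) (hF : ∀ k, ContDiff ℝ 1 (F k))
    (p : Fin N → ℝ)
    (f : EuclideanSpace ℝ (Fin d) → ℝ) (hf : f = fun w => ∑ k, p k * F k w)
    (w₀ g : EuclideanSpace ℝ (Fin d))
    (μ γ L : Fin N → ℝ) (k : Fin N)
    (hμ : 0 < μ k) (hγ0 : 0 ≤ γ k) (hL : 0 < L k)
    (hconv : ConvexOn ℝ Set.univ (F k))
    (hFlip : ∀ x y, ‖gradient (F k) x - gradient (F k) y‖ ≤ L k * ‖x - y‖)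
    (hflip : ∀ x y, ‖gradient f x - gradient f y‖ ≤ L k * ‖x - y‖)
    (P : EuclideanSpace ℝ (Fin d) → ℝ)
    (hP : P = fun w =>
      F k w + ⟪g - gradient (F k) w₀, w - w₀⟫ + μ k / 2 * ‖w - w₀‖ ^ 2)
    (wbark wk : EuclideanSpace ℝ (Fin d))
    (hmin : ∀ v, P wbark ≤ P v)
    (hinexact : ‖wk - wbark‖ ≤ γ k * ‖wbark - w₀‖) :
    f wk ≤ f w₀ - ⟪gradient f w₀, g⟫ / μ k +
        (L k / (2 * (μ k) ^ 2) + γ k / (2 * μ k)) *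
          (‖gradient f w₀‖ ^ 2 + ‖g‖ ^ 2) +
        L k * (1 + γ k) ^ 2 / (2 * (μ k) ^ 2) * ‖g‖ ^ 2 := by
  subst hP
  have hFk : Differentiable ℝ (F k) := (hF k).differentiable one_ne_zero
  have hfd : Differentiable ℝ f :=
    hf ▸ Differentiable.fun_sum fun i _ => ((hF i).differentiable one_ne_zero).const_mul (p i)
  have hloc : IsLocalMin (fedDaneSubproblem (F k) w₀ g (μ k)) wbark :=
    Filter.Eventually.of_forall hmin
  have hdist : ‖wk - w₀‖ ≤ (1 + γ k) * (‖g‖ / μ k) := calc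
    ‖wk - w₀‖ ≤ ‖wk - wbark‖ + ‖wbark - w₀‖ := norm_sub_le_norm_sub_add_norm_sub _ _ _
    _ ≤ (1 + γ k) * ‖wbark - w₀‖ := by linarith
    _ ≤ (1 + γ k) * (‖g‖ / μ k) := by
      gcongr
      exact norm_sub_le_of_isLocalMin_fedDaneSubproblem hconv hFk hμ hloc
  have hinner := inner_sub_le_of_isLocalMin_fedDaneSubproblem (gradient f w₀) hL.le hγ0 hFlip
    hconv hFk hμ hloc hinexact
  have hamgm : (L k / μ k + γ k) * (‖gradient f w₀‖ * ‖g‖) / μ k ≤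
      (L k / (2 * μ k ^ 2) + γ k / (2 * μ k)) * (‖gradient f w₀‖ ^ 2 + ‖g‖ ^ 2) := by
    have h2 := two_mul_le_add_sq ‖gradient f w₀‖ ‖g‖
    calc _ = (L k / (2 * μ k ^ 2) + γ k / (2 * μ k)) * (2 * ‖gradient f w₀‖ * ‖g‖) := by
          field_simp
      _ ≤ _ := by gcongr
  calc f wk ≤ f w₀ + ⟪gradient f w₀, wk - w₀⟫ + L k / 2 * ‖wk - w₀‖ ^ 2 :=
        le_add_inner_gradient_add_of_lipschitz_gradient hfd hflip w₀ wk
    _ ≤ f w₀ + (-⟪gradient f w₀, g⟫ / μ k + (L k / μ k + γ k) * (‖gradient f w₀‖ * ‖g‖) / μ k) +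
        L k / 2 * ((1 + γ k) * (‖g‖ / μ k)) ^ 2 := by gcongr
    _ ≤ _ := by linear_combination hamgm

/-- deterministic descent with device-specific constants.
For a device `k` with constants `μ_k > 0`, `γ_k ∈ [0,1)`, `L_k > 0`, if `F k` is
convex with `L_k`-Lipschitz gradient, `f` has `L_k`-Lipschitz gradient, `w̲_k`
exactly minimizes the FedDANE subproblem with penalty `μ_k`, and
`‖w_k - w̲_k‖ ≤ γ_k ‖w̲_k - w₀‖`, then
`f(w_k) ≤ f(w₀) - ⟪∇f(w₀), g⟫/μ_k + (L_k/(2μ_k²) + γ_k/(2μ_k))(‖∇f(w₀)‖² + ‖g‖²)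
         + (L_k(1+γ_k)²/(2μ_k²))‖g‖²`. -/
theorem feddane_inexact_descent_device_specific {d N : ℕ}
    (F : Fin N → EuclideanSpace ℝ (Fin d) → ℝ) (hF : ∀ k, ContDiff ℝ 1 (F k))
    (p : Fin N → ℝ) (hp : ∀ k, 0 ≤ p k) (hpsum : ∑ k, p k = 1)
    (f : EuclideanSpace ℝ (Fin d) → ℝ) (hf : f = fun w => ∑ k, p k * F k w)
    (w₀ g : EuclideanSpace ℝ (Fin d))
    (μ γ L : Fin N → ℝ) (k : Fin N)
    (hμ : 0 < μ k) (hγ0 : 0 ≤ γ k) (hγ1 : γ k < 1) (hL : 0 < L k)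
    (hconv : ConvexOn ℝ Set.univ (F k))
    (hFlip : ∀ x y, ‖gradient (F k) x - gradient (F k) y‖ ≤ L k * ‖x - y‖)
    (hflip : ∀ x y, ‖gradient f x - gradient f y‖ ≤ L k * ‖x - y‖)
    (P : EuclideanSpace ℝ (Fin d) → ℝ)
    (hP : P = fun w =>
      F k w + ⟪g - gradient (F k) w₀, w - w₀⟫ + μ k / 2 * ‖w - w₀‖ ^ 2)
    (wbark wk : EuclideanSpace ℝ (Fin d))
    (hmin : ∀ v, P wbark ≤ P v)
    (hinexact : ‖wk - wbark‖ ≤ γ k * ‖wbark - w₀‖) :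
    f wk ≤ f w₀ - ⟪gradient f w₀, g⟫ / μ k +
        (L k / (2 * (μ k) ^ 2) + γ k / (2 * μ k)) *
          (‖gradient f w₀‖ ^ 2 + ‖g‖ ^ 2) +
        L k * (1 + γ k) ^ 2 / (2 * (μ k) ^ 2) * ‖g‖ ^ 2 :=
  feddane_inexact_descent_device_specific_general F hF p f hf w₀ g μ γ L k hμ hγ0 hL hconv hFlip
    hflip P hP wbark wk hmin hinexact
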